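/- Let a_0 < a_1 < ⋯ < a_n be real numbers, let c_{a_0}, …, c_{a_n} > 0, l > 0, and weights ω_{a_0}, …, ω_{a_n} > 0. Then the rational GT-Bernstein basis {𝒯_{a_0}, …, 𝒯_{a_n}} is a normalized totally positive basis on [a_0, a_n]; that is: (i) 𝒯_{a_i}(t) ≥ 0 for every t ∈ [a_0, a_n] and every i; (ii) Σ_{i=0}^{n} 𝒯_{a_i}(t) = 1 for every t ∈ [a_0, a_n]; and (iii) for every strictly increasing sequence a_0 ≤ t_0 < t_1 < ⋯ < t_n ≤ a_n, the collocation matrix [𝒯_{a_j}(t_i)]_{i,j=0}^{n} is a totally positive matrix. -/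

import Mathlib

/-- A real matrix is totally positive if every minor (determinant of the submatrix
obtained by selecting rows `r 0 < r 1 < ⋯` and columns `c 0 < c 1 < ⋯`) is
nonnegative. -/
def IsTotallyPositive {N M : ℕ} (A : Matrix (Fin N) (Fin M) ℝ) : Prop :=
  ∀ (k : ℕ) (r : Fin k → Fin N) (c : Fin k → Fin M),
    StrictMono r → StrictMono c → 0 ≤ (A.submatrix r c).det

/-- The GT-Bernstein basis functions
`β_{a_i}(t) = c_{a_i} (l(t − a_0))^{l(a_i − a_0)} (l(a_n − t))^{l(a_n − a_i)}`,
where powers are real powers (`Real.rpow`, which satisfies `0 ^ 0 = 1`). -/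
noncomputable def gtBernstein (n : ℕ) (a c : Fin (n + 1) → ℝ) (l : ℝ)
    (i : Fin (n + 1)) (t : ℝ) : ℝ :=
  c i * (l * (t - a 0)) ^ (l * (a i - a 0)) *
    (l * (a (Fin.last n) - t)) ^ (l * (a (Fin.last n) - a i))

/-- The rational GT-Bernstein basis functions
`𝒯_{a_i}(t) = ω_{a_i} β_{a_i}(t) / Σ_j ω_{a_j} β_{a_j}(t)`. -/
noncomputable def ratGTBernstein (n : ℕ) (a c : Fin (n + 1) → ℝ) (l : ℝ)
    (ω : Fin (n + 1) → ℝ) (i : Fin (n + 1)) (t : ℝ) : ℝ :=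
  ω i * gtBernstein n a c l i t / ∑ j, ω j * gtBernstein n a c l j t

/-!
The collocation matrix of the rational basis is `diag(1 / ∑ⱼ ωⱼ βⱼ(tᵢ)) · [βⱼ(tᵢ)] · diag(ω)`,
so it suffices that GT-Bernstein collocation matrices are totally positive. Up to positive column
factors these are the matrices `[(tᵢ - α)^{eⱼ} (β - tᵢ)^{E - eⱼ}]`. At interior points such a
matrix equals `diag((β - tᵢ)^E) · [xᵢ^{eⱼ}]` with `xᵢ = (tᵢ - α)/(β - tᵢ)` increasing: a
generalized Vandermonde matrix. Its determinant never vanishes (by Rolle, a sum of `k` powers has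
fewer than `k` positive zeros), so deforming the exponents to `0, 1, …, k - 1` shows that it is
positive. Points at the ends of `[α, β]` are reached by continuity.
-/

open Real Finset Set Filter Topology

theorem exists_strictMono_deriv_eq_zero {m : ℕ} {f f' : ℝ → ℝ} {x : Fin (m + 1) → ℝ}
    (hx : StrictMono x) (hf : ∀ y ∈ Icc (x 0) (x (Fin.last m)), HasDerivAt f (f' y) y)
    (hfx : ∀ i, f (x i) = 0) :
    ∃ y : Fin m → ℝ, StrictMono y ∧ (∀ i, y i ∈ Ioo (x i.castSucc) (x i.succ)) ∧
      ∀ i, f' (y i) = 0 := by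
  have hsub : ∀ i : Fin m, Icc (x i.castSucc) (x i.succ) ⊆ Icc (x 0) (x (Fin.last m)) :=
    fun i => Icc_subset_Icc (hx.monotone (Fin.zero_le _)) (hx.monotone (Fin.le_last _))
  have hrolle : ∀ i : Fin m, ∃ y ∈ Ioo (x i.castSucc) (x i.succ), f' y = 0 := fun i =>
    exists_hasDerivAt_eq_zero (hx Fin.castSucc_lt_succ)
      (fun y hy => (hf y (hsub i hy)).continuousAt.continuousWithinAt)
      (by rw [hfx, hfx]) (fun y hy => hf y (hsub i (Ioo_subset_Icc_self hy)))
  choose y hy hy' using hrolle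
  refine ⟨y, fun i j hij => ?_, hy, hy'⟩
  calc y i < x i.succ := (hy i).2
    _ ≤ x j.castSucc := hx.monotone (Fin.succ_le_castSucc_iff.2 hij)
    _ < y j := (hy j).1

theorem eq_zero_of_sum_mul_rpow_eq_zero {k : ℕ} {e x c : Fin k → ℝ} (he : StrictMono e)
    (hx : StrictMono x) (hx0 : ∀ i, 0 < x i) (hc : ∀ i, ∑ j, c j * x i ^ e j = 0) :
    c = 0 := by
  induction k with
  | zero => exact Subsingleton.elim _ _
  | succ m ih =>
    -- After dividing by `y ^ e 0` the first term is constant, so the derivative is a sum of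
    -- `m` powers, and by Rolle it vanishes at `m` increasing points.
    set g : ℝ → ℝ := fun y => ∑ j, c j * y ^ (e j - e 0)
    have hg : ∀ i, g (x i) = 0 := by
      intro i
      have : x i ^ e 0 * g (x i) = 0 := by
        rw [← hc i, Finset.mul_sum]
        refine sum_congr rfl fun j _ => ?_
        rw [mul_left_comm, ← rpow_add (hx0 i), add_sub_cancel]
      exact (mul_eq_zero.1 this).resolve_left (rpow_pos_of_pos (hx0 i) _).ne'
    have hg' : ∀ y, 0 < y →
        HasDerivAt g (∑ j, c j * ((e j - e 0) * y ^ (e j - e 0 - 1))) y := fun y hy =>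
      HasDerivAt.fun_sum fun j _ => (hasDerivAt_rpow_const (Or.inl hy.ne')).const_mul (c j)
    obtain ⟨y, hy, hyx, hy0⟩ := exists_strictMono_deriv_eq_zero hx
      (fun y hy => hg' y ((hx0 0).trans_le hy.1)) hg
    have htail : (fun j : Fin m => c j.succ * (e j.succ - e 0)) = 0 := by
      refine ih (e := fun j => e j.succ - e 0 - 1)
        (fun i j hij => by simpa using he (Fin.succ_lt_succ_iff.2 hij)) hy
        (fun i => (hx0 _).trans (hyx i).1) fun i => ?_
      simpa [Fin.sum_univ_succ, mul_assoc] using hy0 i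
    have hcs : ∀ j : Fin m, c j.succ = 0 := fun j =>
      (mul_eq_zero.1 (congrFun htail j)).resolve_right (sub_ne_zero.2 (he (Fin.succ_pos j)).ne')
    have hc0 : c 0 = 0 := by
      have := hc 0
      simp only [Fin.sum_univ_succ, hcs, zero_mul, sum_const_zero, add_zero] at this
      exact (mul_eq_zero.1 this).resolve_right (rpow_pos_of_pos (hx0 0) _).ne'
    funext j
    exact Fin.cases hc0 hcs j

theorem det_rpow_ne_zero {k : ℕ} {x e : Fin k → ℝ} (hx : StrictMono x) (hx0 : ∀ i, 0 < x i)
    (he : StrictMono e) : (Matrix.of fun i j => x i ^ e j).det ≠ 0 := by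
  intro hdet
  obtain ⟨v, hv, hmv⟩ := Matrix.exists_mulVec_eq_zero_iff.2 hdet
  refine hv (eq_zero_of_sum_mul_rpow_eq_zero he hx hx0 fun i => ?_)
  simpa [Matrix.mulVec, dotProduct, mul_comm] using congrFun hmv i

theorem det_rpow_pos {k : ℕ} {x e : Fin k → ℝ} (hx : StrictMono x) (hx0 : ∀ i, 0 < x i)
    (he : StrictMono e) : 0 < (Matrix.of fun i j => x i ^ e j).det := by
  set f : ℝ → ℝ := fun s => (Matrix.of fun i j => x i ^ ((1 - s) * e j + s * j)).det
  have hcont : Continuous f :=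
    Continuous.matrix_det (continuous_matrix fun i j => by
      simp only [Matrix.of_apply]
      fun_prop (disch := exact (hx0 i).ne'))
  have hne : ∀ s ∈ Icc (0 : ℝ) 1, f s ≠ 0 := by
    refine fun s hs => det_rpow_ne_zero hx hx0 fun i j hij => ?_
    have hij' : (i : ℝ) < j := by exact_mod_cast hij
    rcases hs.1.eq_or_lt with rfl | hs0
    · simpa using he hij
    · nlinarith [he hij, hs.2]
  have hf1 : 0 < f 1 := by
    have : f 1 = (Matrix.vandermonde x).det := by
      simp only [f]
      congr 1
      ext i j
      simp [Matrix.vandermonde, ← rpow_natCast]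
    rw [this, Matrix.det_vandermonde]
    exact prod_pos fun i _ => prod_pos fun j hj => sub_pos.2 (hx (mem_Ioi.1 hj))
  by_contra! hf0
  obtain ⟨s, hs, hfs⟩ := intermediate_value_Icc zero_le_one hcont.continuousOn
    (show (0 : ℝ) ∈ Icc (f 0) (f 1) from ⟨by simpa [f] using hf0, hf1.le⟩)
  exact hne s hs hfs

theorem det_sub_rpow_mul_sub_rpow_pos {k : ℕ} {α β E : ℝ} {τ e : Fin k → ℝ}
    (hτ : StrictMono τ) (hτI : ∀ i, τ i ∈ Ioo α β) (he : StrictMono e) :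
    0 < (Matrix.of fun i j => (τ i - α) ^ e j * (β - τ i) ^ (E - e j)).det := by
  set x : Fin k → ℝ := fun i => (τ i - α) / (β - τ i)
  have hA : ∀ i, 0 < τ i - α := fun i => sub_pos.2 (hτI i).1
  have hB : ∀ i, 0 < β - τ i := fun i => sub_pos.2 (hτI i).2
  have hx : StrictMono x := fun i j hij => by
    simp only [x]
    rw [div_lt_div_iff₀ (hB i) (hB j)]
    nlinarith [hτ hij, hA i, hB j]
  have hM : (Matrix.of fun i j => (τ i - α) ^ e j * (β - τ i) ^ (E - e j)) =
      Matrix.of fun i j => (β - τ i) ^ E * (Matrix.of fun i j => x i ^ e j) i j := by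
    ext i j
    simp only [Matrix.of_apply, x, div_rpow (hA i).le (hB i).le, rpow_sub (hB i)]
    field_simp
  rw [hM, Matrix.det_mul_column]
  exact mul_pos (prod_pos fun i _ => rpow_pos_of_pos (hB i) _)
    (det_rpow_pos hx (fun i => div_pos (hA i) (hB i)) he)

theorem det_sub_rpow_mul_sub_rpow_nonneg {k : ℕ} {α β E : ℝ} {τ e : Fin k → ℝ} (hαβ : α < β)
    (hτ : StrictMono τ) (hτI : ∀ i, τ i ∈ Icc α β) (he : StrictMono e) (he0 : ∀ j, 0 ≤ e j)
    (heE : ∀ j, e j ≤ E) :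
    0 ≤ (Matrix.of fun i j => (τ i - α) ^ e j * (β - τ i) ^ (E - e j)).det := by
  -- Move the points towards the midpoint of `[α, β]`; the exponents are nonnegative, so the
  -- determinant is continuous in the deformation parameter up to the endpoints.
  set f : ℝ → ℝ := fun s => (Matrix.of fun i j =>
    (τ i + s * ((α + β) / 2 - τ i) - α) ^ e j *
      (β - (τ i + s * ((α + β) / 2 - τ i))) ^ (E - e j)).det
  have hcont : Continuous f := by
    refine Continuous.matrix_det (continuous_matrix fun i j => ?_)
    simp only [Matrix.of_apply]
    have := continuous_rpow_const (he0 j)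
    have := continuous_rpow_const (sub_nonneg.2 (heE j))
    fun_prop
  have hpos : ∀ s ∈ Ioo (0 : ℝ) 1, 0 < f s := by
    intro s hs
    refine det_sub_rpow_mul_sub_rpow_pos (fun i j hij => ?_) (fun i => ⟨?_, ?_⟩) he
    · nlinarith [hτ hij, hs.2]
    · nlinarith [mul_nonneg (sub_nonneg.2 hs.2.le) (sub_nonneg.2 (hτI i).1),
        mul_pos hs.1 (sub_pos.2 hαβ)]
    · nlinarith [mul_nonneg (sub_nonneg.2 hs.2.le) (sub_nonneg.2 (hτI i).2),
        mul_pos hs.1 (sub_pos.2 hαβ)]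
  have hlim := ge_of_tendsto (hcont.continuousWithinAt (s := Ioi 0) (x := 0))
    (eventually_of_mem (Ioo_mem_nhdsGT zero_lt_one) fun s hs => (hpos s hs).le)
  simpa [f] using hlim

theorem det_nonneg_of_le_one {k : ℕ} (hk : k ≤ 1) {A : Matrix (Fin k) (Fin k) ℝ}
    (hA : ∀ i j, 0 ≤ A i j) : 0 ≤ A.det := by
  interval_cases k
  · simp
  · exact (Matrix.det_fin_one A).symm ▸ hA 0 0

theorem IsTotallyPositive.diagonal_mul_mul_diagonal {N M : ℕ} {A : Matrix (Fin N) (Fin M) ℝ}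
    (hA : IsTotallyPositive A) {d : Fin N → ℝ} {w : Fin M → ℝ} (hd : ∀ i, 0 ≤ d i)
    (hw : ∀ j, 0 ≤ w j) : IsTotallyPositive (Matrix.diagonal d * A * Matrix.diagonal w) := by
  intro k r s hr hs
  have : (Matrix.diagonal d * A * Matrix.diagonal w).submatrix r s =
      Matrix.of fun i j => w (s j) * (Matrix.of fun i j => d (r i) * A.submatrix r s i j) i j := by
    ext i j
    simp only [Matrix.submatrix_apply, Matrix.mul_diagonal, Matrix.diagonal_mul,
      Matrix.of_apply]
    ring
  rw [this, Matrix.det_mul_row, Matrix.det_mul_column]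
  exact mul_nonneg (prod_nonneg fun j _ => hw _)
    (mul_nonneg (prod_nonneg fun i _ => hd _) (hA k r s hr hs))

theorem isTotallyPositive_sub_rpow_mul_sub_rpow {N M : ℕ} {α β E : ℝ} {τ : Fin N → ℝ}
    {e : Fin M → ℝ} (hαβ : α ≤ β) (hτ : StrictMono τ) (hτI : ∀ i, τ i ∈ Icc α β)
    (he : StrictMono e) (he0 : ∀ j, 0 ≤ e j) (heE : ∀ j, e j ≤ E) :
    IsTotallyPositive (Matrix.of fun i j => (τ i - α) ^ e j * (β - τ i) ^ (E - e j)) := by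
  intro k r s hr hs
  rcases hαβ.lt_or_eq with hlt | rfl
  · exact det_sub_rpow_mul_sub_rpow_nonneg hlt (hτ.comp hr) (fun i => hτI _) (he.comp hs)
      (fun j => he0 _) (fun j => heE _)
  · -- A strictly increasing sequence in `{α}` has at most one term.
    have hα : ∀ i, τ i = α := fun i => (hτI i).2.antisymm (hτI i).1
    have hk : k ≤ 1 := by
      simpa using Fintype.card_le_one_iff.2 fun i j =>
        (hτ.comp hr).injective ((hα _).trans (hα _).symm)
    exact det_nonneg_of_le_one hk fun i j =>
      mul_nonneg (rpow_nonneg (sub_nonneg.2 (hτI _).1) _) (rpow_nonneg (sub_nonneg.2 (hτI _).2) _)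

section GTBernstein

variable {n : ℕ} {a c : Fin (n + 1) → ℝ} {l : ℝ} {t : ℝ}

theorem gtBernstein_nonneg (hc : ∀ i, 0 ≤ c i) (hl : 0 ≤ l)
    (ht : t ∈ Icc (a 0) (a (Fin.last n))) (i : Fin (n + 1)) : 0 ≤ gtBernstein n a c l i t := by
  have h0 := mul_nonneg hl (sub_nonneg.2 ht.1)
  have hn := mul_nonneg hl (sub_nonneg.2 ht.2)
  have := hc i
  unfold gtBernstein
  positivity

theorem gtBernstein_pos {i : Fin (n + 1)} (hc : 0 < c i) (hl : 0 < l)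
    (ht : t ∈ Icc (a 0) (a (Fin.last n))) (h0 : t = a 0 → a i = a 0)
    (hn : t = a (Fin.last n) → a i = a (Fin.last n)) : 0 < gtBernstein n a c l i t := by
  have key : ∀ {u v : ℝ}, 0 ≤ u → (u = 0 → v = 0) → 0 < (l * u) ^ (l * v) := by
    intro u v hu huv
    refine (rpow_nonneg (mul_nonneg hl.le hu) _).lt_of_ne' ?_
    rw [Ne, rpow_eq_zero_iff_of_nonneg (mul_nonneg hl.le hu)]
    rintro ⟨hlu, hlv⟩
    exact hlv (by rw [huv ((mul_eq_zero.1 hlu).resolve_left hl.ne'), mul_zero])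
  unfold gtBernstein
  refine mul_pos (mul_pos hc (key (sub_nonneg.2 ht.1) fun h => ?_))
    (key (sub_nonneg.2 ht.2) fun h => ?_)
  · rw [h0 (sub_eq_zero.1 h), sub_self]
  · rw [hn (sub_eq_zero.1 h).symm, sub_self]

theorem sum_mul_gtBernstein_pos {ω : Fin (n + 1) → ℝ} (hc : ∀ i, 0 < c i) (hl : 0 < l)
    (hω : ∀ i, 0 < ω i) (ht : t ∈ Icc (a 0) (a (Fin.last n))) :
    0 < ∑ j, ω j * gtBernstein n a c l j t := by
  obtain ⟨i, hi⟩ : ∃ i, 0 < gtBernstein n a c l i t := by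
    by_cases htn : t = a (Fin.last n)
    · exact ⟨Fin.last n, gtBernstein_pos (hc _) hl ht (fun h0 => htn.symm.trans h0) fun _ => rfl⟩
    · exact ⟨0, gtBernstein_pos (hc _) hl ht (fun _ => rfl) fun h => absurd h htn⟩
  exact sum_pos'
    (fun j _ => mul_nonneg (hω j).le (gtBernstein_nonneg (fun i => (hc i).le) hl.le ht j))
    ⟨i, mem_univ _, mul_pos (hω i) hi⟩

theorem gtBernstein_eq_mul_rpow (hl : 0 < l) (ht : t ∈ Icc (a 0) (a (Fin.last n)))
    (i : Fin (n + 1)) :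
    gtBernstein n a c l i t = c i * l ^ (l * (a (Fin.last n) - a 0)) *
      ((t - a 0) ^ (l * (a i - a 0)) *
        (a (Fin.last n) - t) ^ (l * (a (Fin.last n) - a 0) - l * (a i - a 0))) := by
  unfold gtBernstein
  rw [show l * (a (Fin.last n) - a i) = l * (a (Fin.last n) - a 0) - l * (a i - a 0) by ring,
    mul_rpow hl.le (sub_nonneg.2 ht.1), mul_rpow hl.le (sub_nonneg.2 ht.2), rpow_sub hl]
  field_simp

theorem isTotallyPositive_gtBernstein_collocation (ha : StrictMono a) (hc : ∀ i, 0 ≤ c i)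
    (hl : 0 < l) {N : ℕ} {τ : Fin N → ℝ} (hτ : StrictMono τ)
    (hτI : ∀ i, τ i ∈ Icc (a 0) (a (Fin.last n))) :
    IsTotallyPositive (Matrix.of fun i j => gtBernstein n a c l j (τ i)) := by
  have hblock := isTotallyPositive_sub_rpow_mul_sub_rpow (E := l * (a (Fin.last n) - a 0))
    (ha.monotone (Fin.zero_le _)) hτ hτI (e := fun j => l * (a j - a 0))
    (fun i j hij => by nlinarith [ha hij]) (fun j => by nlinarith [ha.monotone (Fin.zero_le j)])
    (fun j => by nlinarith [ha.monotone (Fin.le_last j)])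
  convert hblock.diagonal_mul_mul_diagonal (d := 1)
    (w := fun j => c j * l ^ (l * (a (Fin.last n) - a 0)))
    (fun _ => zero_le_one) (fun j => mul_nonneg (hc j) (rpow_nonneg hl.le _)) using 1
  ext i j
  simp only [Matrix.of_apply, Matrix.mul_diagonal, Matrix.diagonal_mul, Pi.one_apply, one_mul,
    gtBernstein_eq_mul_rpow hl (hτI i)]
  ring

end GTBernstein

/-- For strictly increasing nodes `a 0 < a 1 < ⋯ < a n`, coefficients
`c i > 0`, `l > 0` and weights `ω i > 0`, the rational GT-Bernstein basis is a
normalized totally positive basis on `[a 0, a n]`: (i) each `𝒯_{a_i}` is nonnegative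
on `[a 0, a n]`; (ii) the basis sums to `1` at every point of `[a 0, a n]`; and
(iii) every collocation matrix at a strictly increasing sequence
`a 0 ≤ t 0 < t 1 < ⋯ < t n ≤ a n` is totally positive. -/
theorem ratGTBernstein_is_NTP
    (n : ℕ) (a c : Fin (n + 1) → ℝ) (l : ℝ) (ω : Fin (n + 1) → ℝ)
    (ha : StrictMono a) (hc : ∀ i, 0 < c i) (hl : 0 < l) (hω : ∀ i, 0 < ω i) :
    (∀ t ∈ Set.Icc (a 0) (a (Fin.last n)), ∀ i : Fin (n + 1),
        0 ≤ ratGTBernstein n a c l ω i t) ∧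
      (∀ t ∈ Set.Icc (a 0) (a (Fin.last n)),
        ∑ i, ratGTBernstein n a c l ω i t = 1) ∧
      (∀ t : Fin (n + 1) → ℝ, StrictMono t →
        a 0 ≤ t 0 → t (Fin.last n) ≤ a (Fin.last n) →
        IsTotallyPositive
          (Matrix.of fun i j : Fin (n + 1) => ratGTBernstein n a c l ω j (t i))) := by
  have hS := fun t (ht : t ∈ Icc (a 0) (a (Fin.last n))) => sum_mul_gtBernstein_pos hc hl hω ht
  refine ⟨fun t ht i => div_nonneg (mul_nonneg (hω i).le
      (gtBernstein_nonneg (fun i => (hc i).le) hl.le ht i)) (hS t ht).le,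
    fun t ht => by simp only [ratGTBernstein]; rw [← sum_div, div_self (hS t ht).ne'],
    fun t ht ht0 htn => ?_⟩
  have htI : ∀ i, t i ∈ Icc (a 0) (a (Fin.last n)) := fun i =>
    ⟨ht0.trans (ht.monotone (Fin.zero_le i)), (ht.monotone (Fin.le_last i)).trans htn⟩
  convert (isTotallyPositive_gtBernstein_collocation ha (fun i => (hc i).le) hl ht htI
    ).diagonal_mul_mul_diagonal (d := fun i => (∑ j, ω j * gtBernstein n a c l j (t i))⁻¹)
    (fun i => inv_nonneg.2 (hS _ (htI i)).le) (fun j => (hω j).le) using 1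
  ext i j
  simp only [Matrix.of_apply, Matrix.mul_diagonal, Matrix.diagonal_mul, ratGTBernstein]
  ring
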